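/- Two labeling schemes are equal after standardization if and only if they differ by a relabeling; i.e., standardization is a complete invariant for the relabeling equivalence relation. -/

import Mathlib

/-- Standardization scan: `env` maps each seen letter to its new name
together with the sign `ε` making the first occurrence positive; `next` is
the smallest unused new letter. -/
def relabelGo : List (ℕ × Bool) → List (ℕ × ℕ × Bool) → ℕ → List (ℕ × Bool)
  | [], _, _ => []
  | (a, b) :: rest, env, next =>
    match env.lookup a with
    | some (c, e) => (c, xor b e) :: relabelGo rest env next
    | none => (next, true) :: relabelGo rest ((a, next, !b) :: env) (next + 1)

/-- The standardization (canonical relabeling) of a word. -/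
def relabel (w : List (ℕ × Bool)) : List (ℕ × Bool) := relabelGo w [] 0

/-- Relabeling equivalence: a bijection of letters with a sign function. -/
def RelabelEquiv (w w' : List (ℕ × Bool)) : Prop :=
  ∃ (σ : ℕ ≃ ℕ) (ε : ℕ → Bool),
    w' = w.map (fun p => (σ p.1, xor p.2 (ε p.1)))

/-! ### Auxiliary lemmas -/

lemma lookup_cons' (a k : ℕ) (v : ℕ × Bool) (l : List (ℕ × (ℕ × Bool))) :
    List.lookup a ((k, v) :: l) = if a = k then some v else List.lookup a l := by
  by_cases h : a = k
  · have hb : (a == k) = true := by simpa using h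
    simp [List.lookup, hb, h]
  · have hb : (a == k) = false := by simpa using h
    simp [List.lookup, hb, h]

lemma lookup_mem' {a : ℕ} {v : ℕ × Bool} :
    ∀ {l : List (ℕ × (ℕ × Bool))}, List.lookup a l = some v → (a, v) ∈ l := by
  intro l
  induction l with
  | nil => intro h; cases h
  | cons p rest ih =>
    obtain ⟨k, u⟩ := p
    rw [lookup_cons']
    by_cases h : a = k
    · subst h; simp only [if_pos rfl]
      rintro ⟨rfl⟩; exact List.mem_cons_self
    · rw [if_neg h]; intro hv; exact List.mem_cons_of_mem _ (ih hv)

/-- Invariance of the scan under relabeling. -/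
lemma relabelGo_map (σ : ℕ ≃ ℕ) (ε : ℕ → Bool) :
    ∀ (w : List (ℕ × Bool)) (env env' : List (ℕ × ℕ × Bool)) (next : ℕ),
      (∀ a, List.lookup (σ a) env' =
        (List.lookup a env).map (fun ce => (ce.1, xor ce.2 (ε a)))) →
      relabelGo (w.map (fun p => (σ p.1, xor p.2 (ε p.1)))) env' next
        = relabelGo w env next := by
  intro w
  induction w with
  | nil => intros; rfl
  | cons p rest ih =>
    obtain ⟨a, b⟩ := p
    intro env env' next h
    cases hl : List.lookup a env with
    | some ce =>
      obtain ⟨c, e⟩ := ce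
      have hl' : List.lookup (σ a) env' = some (c, xor e (ε a)) := by
        rw [h a, hl]; rfl
      simp only [List.map_cons, relabelGo, hl, hl']
      have hb : xor (xor b (ε a)) (xor e (ε a)) = xor b e := by
        cases b <;> cases e <;> cases (ε a) <;> rfl
      rw [hb, ih env env' next h]
    | none =>
      have hl' : List.lookup (σ a) env' = none := by rw [h a, hl]; rfl
      simp only [List.map_cons, relabelGo, hl, hl']
      congr 1
      apply ih
      intro x
      by_cases hx : x = a
      · subst hx
        rw [lookup_cons', lookup_cons', if_pos rfl, if_pos rfl]
        simp only [Option.map_some]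
        have hb : (!(xor b (ε x))) = xor (!b) (ε x) := by
          cases b <;> cases (ε x) <;> rfl
        rw [hb]
      · rw [lookup_cons', lookup_cons',
          if_neg (fun hc => hx (σ.injective hc)), if_neg hx, h x]

/-- The environment accumulated by the scan. -/
def scanEnv : List (ℕ × Bool) → List (ℕ × ℕ × Bool) → ℕ → List (ℕ × ℕ × Bool)
  | [], env, _ => env
  | (a, b) :: rest, env, next =>
    match env.lookup a with
    | some _ => scanEnv rest env next
    | none => scanEnv rest ((a, next, !b) :: env) (next + 1)

lemma scanEnv_lookup_mono :
    ∀ (w : List (ℕ × Bool)) (env : List (ℕ × ℕ × Bool)) (next : ℕ) {a : ℕ} {v : ℕ × Bool},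
      List.lookup a env = some v → List.lookup a (scanEnv w env next) = some v := by
  intro w
  induction w with
  | nil => intro env next a v hv; simpa [scanEnv] using hv
  | cons p rest ih =>
    obtain ⟨x, b⟩ := p
    intro env next a v hv
    cases hl : List.lookup x env with
    | some ce => simp only [scanEnv, hl]; exact ih _ _ hv
    | none =>
      simp only [scanEnv, hl]
      apply ih
      rw [lookup_cons', if_neg]
      · exact hv
      · rintro rfl; rw [hv] at hl; cases hl

/-- The scan output is a relabeling of the input via the final environment. -/
lemma relabelGo_eq_map :
    ∀ (w : List (ℕ × Bool)) (env E : List (ℕ × ℕ × Bool)) (next : ℕ),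
      (∀ a v, List.lookup a (scanEnv w env next) = some v → List.lookup a E = some v) →
      relabelGo w env next = w.map (fun p =>
        (((List.lookup p.1 E).getD (0, false)).1,
          xor p.2 ((List.lookup p.1 E).getD (0, false)).2)) := by
  intro w
  induction w with
  | nil => intros; rfl
  | cons p rest ih =>
    obtain ⟨a, b⟩ := p
    intro env E next hE
    cases hl : List.lookup a env with
    | some ce =>
      obtain ⟨c, e⟩ := ce
      have hfin : List.lookup a (scanEnv ((a, b) :: rest) env next) = some (c, e) := by
        simp only [scanEnv, hl]
        exact scanEnv_lookup_mono rest env next hl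
      have hEa : List.lookup a E = some (c, e) := hE _ _ hfin
      simp only [relabelGo, hl, List.map_cons, hEa, Option.getD_some]
      congr 1
      apply ih
      intro x v hx
      apply hE
      simpa only [scanEnv, hl] using hx
    | none =>
      have hfin : List.lookup a (scanEnv ((a, b) :: rest) env next) = some (next, !b) := by
        simp only [scanEnv, hl]
        apply scanEnv_lookup_mono
        rw [lookup_cons', if_pos rfl]
      have hEa : List.lookup a E = some (next, !b) := hE _ _ hfin
      simp only [relabelGo, hl, List.map_cons, hEa, Option.getD_some]
      have hb : (true : Bool) = xor b (!b) := by cases b <;> rfl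
      rw [← hb]
      congr 1
      apply ih
      intro x v hx
      apply hE
      simpa only [scanEnv, hl] using hx

/-- Distinctness of new names in the accumulated environment. -/
lemma scanEnv_inj :
    ∀ (w : List (ℕ × Bool)) (env : List (ℕ × ℕ × Bool)) (next : ℕ),
      (∀ p ∈ env, p.2.1 < next) →
      (∀ p ∈ env, ∀ q ∈ env, p.2.1 = q.2.1 → p.1 = q.1) →
      ∀ p ∈ scanEnv w env next, ∀ q ∈ scanEnv w env next, p.2.1 = q.2.1 → p.1 = q.1 := by
  intro w
  induction w with
  | nil => intro env next _ h2; simpa [scanEnv] using h2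
  | cons p rest ih =>
    obtain ⟨x, b⟩ := p
    intro env next h1 h2
    cases hl : List.lookup x env with
    | some ce => simp only [scanEnv, hl]; exact ih env next h1 h2
    | none =>
      simp only [scanEnv, hl]
      apply ih
      · intro p hp
        rcases List.mem_cons.1 hp with rfl | hp
        · exact Nat.lt_succ_self _
        · exact lt_trans (h1 p hp) (Nat.lt_succ_self _)
      · intro p hp q hq hpq
        rcases List.mem_cons.1 hp with rfl | hp <;>
          rcases List.mem_cons.1 hq with rfl | hq
        · rfl
        · exact absurd hpq (Ne.symm (ne_of_lt (h1 q hq)))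
        · exact absurd hpq (ne_of_lt (h1 p hp))
        · exact h2 p hp q hq hpq

/-- Every letter of the word ends up in the final environment. -/
lemma scanEnv_isSome :
    ∀ (w : List (ℕ × Bool)) (env : List (ℕ × ℕ × Bool)) (next : ℕ) (a : ℕ),
      a ∈ w.map Prod.fst → (List.lookup a (scanEnv w env next)).isSome := by
  intro w
  induction w with
  | nil => intro env next a h; cases h
  | cons p rest ih =>
    obtain ⟨x, b⟩ := p
    intro env next a ha
    rcases List.mem_cons.1 ha with rfl | ha
    · cases hl : List.lookup a env with
      | some v =>
        simp only [scanEnv, hl]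
        rw [scanEnv_lookup_mono rest env next hl]; rfl
      | none =>
        simp only [scanEnv, hl]
        rw [scanEnv_lookup_mono rest _ _ (v := (next, !b)) (by rw [lookup_cons', if_pos rfl])]
        rfl
    · cases hl : List.lookup x env with
      | some v => simp only [scanEnv, hl]; exact ih _ _ _ ha
      | none => simp only [scanEnv, hl]; exact ih _ _ _ ha

lemma lookup_isSome_of_mem_keys :
    ∀ {l : List (ℕ × (ℕ × Bool))} {a : ℕ}, a ∈ l.map Prod.fst →
      ∃ v, List.lookup a l = some v := by
  intro l
  induction l with
  | nil => intro a h; cases h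
  | cons p rest ih =>
    obtain ⟨k, u⟩ := p
    intro a h
    by_cases hk : a = k
    · exact ⟨u, by rw [lookup_cons', if_pos hk]⟩
    · rcases List.mem_cons.1 h with h' | h'
      · exact absurd h' hk
      · obtain ⟨v, hv⟩ := ih h'
        exact ⟨v, by rw [lookup_cons', if_neg hk, hv]⟩

/-- Extend an injection on a finite set of naturals to a permutation of `ℕ`. -/
lemma exists_perm_extend (S : Finset ℕ) (f : ℕ → ℕ) (hf : Set.InjOn f ↑S) :
    ∃ σ : ℕ ≃ ℕ, ∀ a ∈ S, σ a = f a := by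
  classical
  have hS : (↑S : Set ℕ).Finite := S.finite_toSet
  have hT : (f '' ↑S).Finite := hS.image f
  have h1 : ((↑S : Set ℕ)ᶜ).Infinite := hS.infinite_compl
  have h2 : ((f '' ↑S)ᶜ).Infinite := hT.infinite_compl
  haveI := h1.to_subtype
  haveI := h2.to_subtype
  haveI : Denumerable ↥((↑S : Set ℕ)ᶜ) := Nat.Subtype.denumerable _
  haveI : Denumerable ↥((f '' ↑S)ᶜ) := Nat.Subtype.denumerable _
  let e₀ : (↑S : Set ℕ) ≃ (f '' ↑S) := (hf.bijOn_image).equiv f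
  let e₁ : ((↑S : Set ℕ)ᶜ : Set ℕ) ≃ ((f '' ↑S)ᶜ : Set ℕ) :=
    (Denumerable.eqv _).trans (Denumerable.eqv _).symm
  obtain ⟨σ, hσ⟩ := (Equiv.Set.compl e₀).symm e₁
  refine ⟨σ, fun a ha => ?_⟩
  have h := hσ ⟨a, by simpa using ha⟩
  rw [h]
  simp [e₀, Set.BijOn.equiv]

/-- A word is relabel-equivalent to its standardization. -/
lemma relabelEquiv_relabel (w : List (ℕ × Bool)) : RelabelEquiv w (relabel w) := by
  classical
  set E := scanEnv w [] 0 with hEdef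
  set f : ℕ → ℕ := fun a => ((List.lookup a E).getD (0, false)).1 with hf
  set g : ℕ → Bool := fun a => ((List.lookup a E).getD (0, false)).2 with hg
  have hmap : relabel w = w.map (fun p => (f p.1, xor p.2 (g p.1))) := by
    apply relabelGo_eq_map w [] E 0
    intro a v hv; exact hv
  have hinj0 : ∀ p ∈ E, ∀ q ∈ E, p.2.1 = q.2.1 → p.1 = q.1 := by
    apply scanEnv_inj w [] 0
    · intro p hp; cases hp
    · intro p hp; cases hp
  set S : Finset ℕ := (E.map Prod.fst).toFinset with hS
  have hinj : Set.InjOn f ↑S := by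
    intro a ha a' ha' hfa
    obtain ⟨v, hv⟩ := lookup_isSome_of_mem_keys (l := E) (by
      rw [Finset.mem_coe, hS, List.mem_toFinset] at ha; exact ha)
    obtain ⟨v', hv'⟩ := lookup_isSome_of_mem_keys (l := E) (by
      rw [Finset.mem_coe, hS, List.mem_toFinset] at ha'; exact ha')
    have hva : f a = v.1 := by rw [hf]; simp only [hv, Option.getD_some]
    have hva' : f a' = v'.1 := by rw [hf]; simp only [hv', Option.getD_some]
    exact hinj0 (a, v) (lookup_mem' hv) (a', v') (lookup_mem' hv')
      (by simpa only [← hva, ← hva'] using hfa)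
  obtain ⟨σ, hσ⟩ := exists_perm_extend S f hinj
  refine ⟨σ, g, ?_⟩
  rw [hmap]
  apply List.map_congr_left
  intro p hp
  have hkey : p.1 ∈ S := by
    have h1 : (List.lookup p.1 E).isSome :=
      scanEnv_isSome w [] 0 p.1 (List.mem_map_of_mem (f := Prod.fst) hp)
    obtain ⟨v, hv⟩ := Option.isSome_iff_exists.1 h1
    have := lookup_mem' hv
    simp only [hS, List.mem_toFinset]
    exact List.mem_map_of_mem (f := Prod.fst) this
  rw [hσ p.1 hkey]

lemma RelabelEquiv.refl (w : List (ℕ × Bool)) : RelabelEquiv w w := by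
  refine ⟨Equiv.refl ℕ, fun _ => false, ?_⟩
  simp

lemma RelabelEquiv.symm {w w' : List (ℕ × Bool)} (h : RelabelEquiv w w') :
    RelabelEquiv w' w := by
  obtain ⟨σ, ε, rfl⟩ := h
  refine ⟨σ.symm, fun x => ε (σ.symm x), ?_⟩
  have hc : (fun q : ℕ × Bool => (σ.symm q.1, xor q.2 ((fun x => ε (σ.symm x)) q.1))) ∘
      (fun p : ℕ × Bool => (σ p.1, xor p.2 (ε p.1))) = id := by
    funext p
    obtain ⟨x, b⟩ := p
    simp [Function.comp, Bool.xor_assoc]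
  rw [List.map_map, hc, List.map_id]

lemma RelabelEquiv.trans {w₁ w₂ w₃ : List (ℕ × Bool)}
    (h : RelabelEquiv w₁ w₂) (h' : RelabelEquiv w₂ w₃) : RelabelEquiv w₁ w₃ := by
  obtain ⟨σ, ε, rfl⟩ := h
  obtain ⟨σ', ε', rfl⟩ := h'
  refine ⟨σ.trans σ', fun x => xor (ε x) (ε' (σ x)), ?_⟩
  rw [List.map_map]
  apply List.map_congr_left
  intro p _
  simp [Function.comp, Bool.xor_assoc]

/-- Standardization is a complete invariant for relabeling equivalence: two
labeling schemes differ by a relabeling iff they have the same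
standardization. -/
theorem relabel_complete_invariant (w w' : List (ℕ × Bool)) :
    RelabelEquiv w w' ↔ relabel w = relabel w' := by
  constructor
  · rintro ⟨σ, ε, rfl⟩
    unfold relabel
    rw [relabelGo_map σ ε w [] [] 0 (fun a => rfl)]
  · intro h
    have h1 := relabelEquiv_relabel w
    have h2 := relabelEquiv_relabel w'
    rw [h] at h1
    exact h1.trans h2.symm
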